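/- Let a ∈ ℤ/mℤ, d ∈ (ℤ/mℤ)^{n-1}, and suppose σ is invertible modulo m. Then the orbit O(AA(a,d)) = (a_i)_{i∈ℤ^{n-1}×ℕ} of the arithmetic array AA(a,d) under the ACA satisfies a_i = σ^{i_n}(a + Σ_{k=1}^n i_k d_k) for all i ∈ ℤ^{n-1}×ℕ, where d_n := σ^{-1} Σ_{k=1}^{n-1} σ_k d_k. -/

import Mathlib

open Finset

/-- The box `[-r, r]^N` of indices of the weight array. -/
noncomputable def box (r N : ℕ) : Finset (Fin N → ℤ) :=
  Fintype.piFinset fun _ : Fin N => Finset.Icc (-(r : ℤ)) (r : ℤ)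

/-- The arithmetic array `AA(a, d)` with first element `a` and common difference `d`. -/
def AA (m N : ℕ) (a : ZMod m) (d : Fin N → ZMod m) : (Fin N → ℤ) → ZMod m :=
  fun i => a + ∑ k, (i k : ZMod m) * d k

/-- The additive cellular automaton of dimension `N`, radius `r` and weight array `W`. -/
noncomputable def ACA (m N r : ℕ) (W : (Fin N → ℤ) → ℤ) (A : (Fin N → ℤ) → ZMod m) :
    (Fin N → ℤ) → ZMod m :=
  fun i => ∑ j ∈ box r N, (W j : ZMod m) * A (i + j)

/-! An arithmetic array stays arithmetic under the automaton: since `ACA` is linear and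
`AA(a, d)(i + l) = AA(a, d)(i) + ∑ l_k d_k`, one step sends `AA(a, d)` to `σ • AA(a + e, d)`
as soon as `∑ σ_k d_k = σ e`. Iterating, the `j`-th image is `σ^j • AA(a + j e, d)`, and an
invertible `σ` allows `e = σ⁻¹ ∑ σ_k d_k`. -/

/-- `σ = ∑_l w_l`. -/
noncomputable def weightSum (r N : ℕ) (W : (Fin N → ℤ) → ℤ) : ℤ :=
  ∑ l ∈ box r N, W l

/-- `σ_k = ∑_l l_k w_l`. -/
noncomputable def weightMoment (r N : ℕ) (W : (Fin N → ℤ) → ℤ) (k : Fin N) : ℤ :=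
  ∑ l ∈ box r N, l k * W l

section

variable {m N : ℕ}

theorem AA_apply_add (a : ZMod m) (d : Fin N → ZMod m) (i l : Fin N → ℤ) :
    AA m N a d (i + l) = AA m N a d i + ∑ k, (l k : ZMod m) * d k := by
  simp only [AA, Pi.add_apply, Int.cast_add, add_mul, sum_add_distrib]
  ring

theorem ACA_smul (r : ℕ) (W : (Fin N → ℤ) → ℤ) (s : ZMod m) (A : (Fin N → ℤ) → ZMod m) :
    ACA m N r W (s • A) = s • ACA m N r W A := by
  funext i
  simp only [ACA, Pi.smul_apply, smul_eq_mul, mul_sum]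
  exact sum_congr rfl fun _ _ => mul_left_comm _ _ _

theorem ACA_AA (r : ℕ) (W : (Fin N → ℤ) → ℤ) (a e : ZMod m) (d : Fin N → ZMod m)
    (he : ∑ k, (weightMoment r N W k : ZMod m) * d k = (weightSum r N W : ZMod m) * e) :
    ACA m N r W (AA m N a d) = (weightSum r N W : ZMod m) • AA m N (a + e) d := by
  funext i
  have moments : ∑ l ∈ box r N, (W l : ZMod m) * ∑ k, (l k : ZMod m) * d k =
      ∑ k, (weightMoment r N W k : ZMod m) * d k := by
    simp only [weightMoment, Int.cast_sum, Int.cast_mul, mul_sum, sum_mul]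
    rw [sum_comm]
    exact sum_congr rfl fun _ _ => sum_congr rfl fun _ _ => by ring
  calc ACA m N r W (AA m N a d) i
      = ∑ l ∈ box r N, (W l : ZMod m) * (AA m N a d i + ∑ k, (l k : ZMod m) * d k) := by
        simp only [ACA, AA_apply_add]
    _ = (weightSum r N W : ZMod m) * AA m N a d i + ∑ k, (weightMoment r N W k : ZMod m) * d k := by
        simp only [← moments, mul_add, sum_add_distrib, weightSum, Int.cast_sum, sum_mul]
    _ = ((weightSum r N W : ZMod m) • AA m N (a + e) d) i := by
        rw [he, Pi.smul_apply, smul_eq_mul, AA, AA]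
        ring

theorem iterate_ACA_AA (r : ℕ) (W : (Fin N → ℤ) → ℤ) (a e : ZMod m) (d : Fin N → ZMod m)
    (he : ∑ k, (weightMoment r N W k : ZMod m) * d k = (weightSum r N W : ZMod m) * e)
    (j : ℕ) :
    (ACA m N r W)^[j] (AA m N a d) = (weightSum r N W : ZMod m) ^ j • AA m N (a + j * e) d := by
  induction j with
  | zero => simp
  | succ j ih =>
    rw [Function.iterate_succ_apply', ih, ACA_smul, ACA_AA r W _ e d he, smul_smul, pow_succ]
    push_cast
    ring_nf

end

/-- Entries of the orbit of an arithmetic array: `a_i = σ^(i_n) (a + ∑_{k=1}^n i_k d_k)`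
where `d_n := σ⁻¹ ∑ σ_k d_k`, provided `σ` is invertible. -/
theorem stmt6 (m N r : ℕ) (W : (Fin N → ℤ) → ℤ) (a : ZMod m) (d : Fin N → ZMod m)
    (hσ : IsUnit ((∑ j ∈ box r N, W j : ℤ) : ZMod m))
    (i : Fin N → ℤ) (j : ℕ) :
    (ACA m N r W)^[j] (AA m N a d) i =
      ((∑ j ∈ box r N, W j : ℤ) : ZMod m) ^ j *
        (a + ∑ k, (i k : ZMod m) * d k +
          (j : ZMod m) *
            (((∑ j ∈ box r N, W j : ℤ) : ZMod m)⁻¹ *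
              ∑ k, ((∑ j ∈ box r N, j k * W j : ℤ) : ZMod m) * d k)) := by
  have he : ∑ k, (weightMoment r N W k : ZMod m) * d k = (weightSum r N W : ZMod m) *
      ((weightSum r N W : ZMod m)⁻¹ * ∑ k, (weightMoment r N W k : ZMod m) * d k) := by
    rw [← mul_assoc, ZMod.mul_inv_of_unit (weightSum r N W : ZMod m) hσ, one_mul]
  rw [iterate_ACA_AA r W a _ d he]
  simp only [Pi.smul_apply, smul_eq_mul, AA, weightSum, weightMoment]
  ring
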